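/- Let Φ = Ω or Φ = Γ, let X be an infinite Hausdorff topological space, and assume that C*_p(X) is countably dense in USC*_p(X), i.e., for every f ∈ USC*_p(X) there is a countable set G ⊆ C*_p(X) with f ∈ closure(G). Then the following are equivalent, where 0̄ denotes the constant zero function on X: (a) USC*_p(X) satisfies the selection principle S₁(Φ̃↑, 𝒟); (b) USC*_p(X) is separable and X is an S₁(Φ,Ω)-space; (c) USC*_p(X) is separable and satisfies S₁(Φ_0̄,Ω_0̄); (d) USC*_p(X) is separable and satisfies S₁(Φ̃↑,Ω_0̄). -/

import Mathlib

open Set Filter Topology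

namespace Selectors

variable {X : Type*}

/-- Kinds of covers / of pointwise properties: `o` (ordinary covers / 𝒪),
`omega` (ω-covers / Ω), `gamma` (γ-covers / Γ). -/
inductive CoverKind : Type
  | o | omega | gamma

/-- `f` is a bounded upper semicontinuous real function on `X`. -/
def IsUSCb [TopologicalSpace X] (f : X → ℝ) : Prop :=
  (∀ a : ℝ, IsOpen {x | f x < a}) ∧ ∃ M : ℝ, ∀ x, |f x| ≤ M

/-- `USC*_p(X)`: the set of bounded upper semicontinuous real functions on `X`,
regarded as a subset of `X → ℝ` with the product (pointwise convergence) topology. -/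
def USCb (X : Type*) [TopologicalSpace X] : Set (X → ℝ) := {f | IsUSCb f}

/-- `C*_p(X)`: the set of bounded continuous real functions on `X`. -/
def Cb (X : Type*) [TopologicalSpace X] : Set (X → ℝ) :=
  {f | Continuous f ∧ ∃ M : ℝ, ∀ x, |f x| ≤ M}

/-- `𝒰` is a cover of `X`. -/
def IsCover (𝒰 : Set (Set X)) : Prop := ∀ x : X, ∃ U ∈ 𝒰, x ∈ U

/-- The (not necessarily open) cover condition of the given kind:
an `o`-cover is a cover; an ω-cover is a cover not containing `X` such that every
finite subset of `X` is contained in a member; a γ-cover is an infinite cover such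
that each point belongs to all but finitely many members. -/
def kindSets (k : CoverKind) (𝒰 : Set (Set X)) : Prop :=
  match k with
  | .o => IsCover 𝒰
  | .omega => IsCover 𝒰 ∧ Set.univ ∉ 𝒰 ∧ ∀ F : Set X, F.Finite → ∃ U ∈ 𝒰, F ⊆ U
  | .gamma => IsCover 𝒰 ∧ 𝒰.Infinite ∧ ∀ x : X, {U ∈ 𝒰 | x ∉ U}.Finite

/-- The family `𝒪(X)`, `Ω(X)` or `Γ(X)` of open covers/ω-covers/γ-covers of `X`. -/
def OpenKindCovers (X : Type*) [TopologicalSpace X] (k : CoverKind) : Set (Set (Set X)) :=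
  {𝒰 | (∀ U ∈ 𝒰, IsOpen U) ∧ kindSets k 𝒰}

/-- The selection principle `S₁(A, B)`. -/
def S1 {α : Type*} (A B : Set (Set α)) : Prop :=
  ∀ u : ℕ → Set α, (∀ n, u n ∈ A) →
    ∃ sel : ℕ → α, (∀ n, sel n ∈ u n) ∧ Set.range sel ∈ B

/-- The selection principle `S_fin(A, B)`. -/
def Sfin {α : Type*} (A B : Set (Set α)) : Prop :=
  ∀ u : ℕ → Set α, (∀ n, u n ∈ A) →
    ∃ V : ℕ → Set α, (∀ n, V n ⊆ u n ∧ (V n).Finite) ∧ (⋃ n, V n) ∈ B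

/-- Property `(𝒪_h)` of a family `F` of real functions. -/
def PropO (h : X → ℝ) (F : Set (X → ℝ)) : Prop :=
  ∀ x : X, h x ∈ closure ((fun f : X → ℝ => f x) '' F)

/-- Property `(Ω_h)`: `h ∉ F` and `h` belongs to the closure of `F` in `ℝ^X`. -/
def PropOmega (h : X → ℝ) (F : Set (X → ℝ)) : Prop :=
  h ∉ F ∧ h ∈ closure F

/-- Property `(Γ_h)`. -/
def PropGamma (h : X → ℝ) (F : Set (X → ℝ)) : Prop :=
  F.Infinite ∧ ∀ ε : ℝ, 0 < ε → ∀ x : X, {f ∈ F | ε ≤ |f x - h x|}.Finite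

/-- Property `(Φ_h)` for `Φ = 𝒪, Ω, Γ`. -/
def kindProp (k : CoverKind) (h : X → ℝ) (F : Set (X → ℝ)) : Prop :=
  match k with
  | .o => PropO h F
  | .omega => PropOmega h F
  | .gamma => PropGamma h F

/-- The family `Φ_h(H) = {F ⊆ H : F has (Φ_h) and ∀ f ∈ F, f ≥ h ∧ f - h ∈ H}`. -/
def PhiH (k : CoverKind) (h : X → ℝ) (H : Set (X → ℝ)) : Set (Set (X → ℝ)) :=
  {F | F ⊆ H ∧ kindProp k h F ∧ ∀ f ∈ F, h ≤ f ∧ f - h ∈ H}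

/-- `F ⊆ H` is sequentially dense in `H` (with respect to pointwise convergence). -/
def SeqDenseIn (F H : Set (X → ℝ)) : Prop :=
  F ⊆ H ∧ ∀ f ∈ H, ∃ u : ℕ → (X → ℝ), (∀ n, u n ∈ F) ∧
    Filter.Tendsto u Filter.atTop (nhds f)

/-- `F ⊆ H` is dense in `H`. -/
def DenseIn (F H : Set (X → ℝ)) : Prop :=
  F ⊆ H ∧ H ⊆ closure F

/-- `F` is pointwise dense: `{f x : f ∈ F}` is dense in `ℝ` for every `x`. -/
def PointwiseDense (F : Set (X → ℝ)) : Prop :=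
  ∀ x : X, Dense {y : ℝ | ∃ f ∈ F, f x = y}

/-- `F ⊆ H` is upper sequentially dense in `H`. -/
def UpperSeqDenseIn (F H : Set (X → ℝ)) : Prop :=
  F ⊆ H ∧ ∀ f ∈ H, ∃ u : ℕ → (X → ℝ),
    (∀ n, u n ∈ F ∧ f ≤ u n ∧ u n - f ∈ H) ∧
    Filter.Tendsto u Filter.atTop (nhds f)

/-- `F ⊆ H` is upper dense in `H`: for every `f ∈ H` the set
`{h ∈ F : h ≥ f ∧ h - f ∈ H}` is dense in `{h ∈ H : h ≥ f}`. -/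
def UpperDenseIn (F H : Set (X → ℝ)) : Prop :=
  F ⊆ H ∧ ∀ f ∈ H, {g | g ∈ H ∧ f ≤ g} ⊆ closure {g | g ∈ F ∧ f ≤ g ∧ g - f ∈ H}

/-- `𝒮(H)`: the family of sequentially dense subsets of `H`. -/
def Sfam (H : Set (X → ℝ)) : Set (Set (X → ℝ)) := {F | SeqDenseIn F H}

/-- `𝒟(H)`: the family of dense subsets of `H`. -/
def Dfam (H : Set (X → ℝ)) : Set (Set (X → ℝ)) := {F | DenseIn F H}

/-- `𝒫(H)`: the family of pointwise dense subsets of `H`. -/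
def Pfam (H : Set (X → ℝ)) : Set (Set (X → ℝ)) := {F | F ⊆ H ∧ PointwiseDense F}

/-- `Φ̃↑(H)`: for `Φ = Γ` the upper sequentially dense subsets, for `Φ = Ω`
the upper dense subsets, for `Φ = 𝒪` the pointwise dense subsets of `H`. -/
def upTilde (k : CoverKind) (H : Set (X → ℝ)) : Set (Set (X → ℝ)) :=
  match k with
  | .o => Pfam H
  | .omega => {F | UpperDenseIn F H}
  | .gamma => {F | UpperSeqDenseIn F H}

/-- `H` is separable: it has a countable dense subset. -/
def SeparableSet (H : Set (X → ℝ)) : Prop := ∃ D, D.Countable ∧ DenseIn D H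

/-- `H` is sequentially separable: it has a countable sequentially dense subset. -/
def SeqSeparableSet (H : Set (X → ℝ)) : Prop := ∃ D, D.Countable ∧ SeqDenseIn D H

/-- Property `(ε)`: every open ω-cover contains a countable ω-subcover. -/
def PropEps (X : Type*) [TopologicalSpace X] : Prop :=
  ∀ 𝒰 : Set (Set X), 𝒰 ∈ OpenKindCovers X CoverKind.omega →
    ∃ 𝒱 ⊆ 𝒰, 𝒱.Countable ∧ 𝒱 ∈ OpenKindCovers X CoverKind.omega

/-- `S` is an `F_σ` set with respect to the topology `t`. -/
def IsFsigmaIn (t : TopologicalSpace X) (S : Set X) : Prop :=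
  ∃ C : ℕ → Set X, (∀ n, IsClosed[t] (C n)) ∧ S = ⋃ n, C n

/-- `S` is locally closed with respect to `t`: an intersection of a `t`-open
and a `t`-closed set. -/
def IsLocallyClosedIn (t : TopologicalSpace X) (S : Set X) : Prop :=
  ∃ U F : Set X, IsOpen[t] U ∧ IsClosed[t] F ∧ S = U ∩ F

/-- `S` is a cozero set with respect to `t`. -/
def IsCozeroIn (t : TopologicalSpace X) (S : Set X) : Prop :=
  ∃ f : X → ℝ, @Continuous X ℝ t inferInstance f ∧ S = {x | f x ≠ 0}

/-- The `OB`-property of `⟨X, t⟩`: there is a separable metrizable topology `t'`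
on `X` weaker than `t` such that every locally closed subset of `⟨X, t⟩` is an
`F_σ`-set in `t'`. -/
def OBProperty (X : Type*) [t : TopologicalSpace X] : Prop :=
  ∃ t' : TopologicalSpace X,
    (∀ s : Set X, IsOpen[t'] s → IsOpen[t] s) ∧
    @TopologicalSpace.MetrizableSpace X t' ∧
    @TopologicalSpace.SeparableSpace X t' ∧
    ∀ S : Set X, IsLocallyClosedIn t S → IsFsigmaIn t' S

/-- The `V`-property of `⟨X, t⟩`: there is a separable metrizable topology `t'`
on `X` weaker than `t` such that every cozero subset of `⟨X, t⟩` is an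
`F_σ`-set in `t'`. -/
def VProperty (X : Type*) [t : TopologicalSpace X] : Prop :=
  ∃ t' : TopologicalSpace X,
    (∀ s : Set X, IsOpen[t'] s → IsOpen[t] s) ∧
    @TopologicalSpace.MetrizableSpace X t' ∧
    @TopologicalSpace.SeparableSpace X t' ∧
    ∀ S : Set X, IsCozeroIn t S → IsFsigmaIn t' S

/-- `iw(X) = ℵ₀`: `X` can be mapped by a one-to-one continuous map onto a
Tychonoff space of countable weight. -/
def IWCountable (X : Type*) [TopologicalSpace X] : Prop :=
  ∃ (Y : Type) (tY : TopologicalSpace Y) (f : X → Y),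
    @Continuous X Y _ tY f ∧ Function.Bijective f ∧
    @T35Space Y tY ∧ @SecondCountableTopology Y tY

/-- `Φ^sh(X)`: the family of open shrinkable φ-covers of `X`. -/
def ShFam (X : Type*) [TopologicalSpace X] (k : CoverKind) : Set (Set (Set X)) :=
  {𝒰 | 𝒰 ∈ OpenKindCovers X k ∧
    ∃ 𝒲 ∈ OpenKindCovers X k, ∀ W ∈ 𝒲, ∃ U ∈ 𝒰, closure W ⊆ U}

/-- A zero set. -/
def IsZeroSet [TopologicalSpace X] (S : Set X) : Prop :=
  ∃ f : X → ℝ, Continuous f ∧ S = {x | f x = 0}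

/-- A cozero set. -/
def IsCozeroSet [TopologicalSpace X] (S : Set X) : Prop :=
  ∃ f : X → ℝ, Continuous f ∧ S = {x | f x ≠ 0}

/-- `Φ^fsh_cz(X)`: the family of functionally shrinkable φ-covers of `X`
consisting of cozero sets. -/
def FshCzFam (X : Type*) [TopologicalSpace X] (k : CoverKind) : Set (Set (Set X)) :=
  {𝒰 | (∀ U ∈ 𝒰, IsCozeroSet U) ∧ kindSets k 𝒰 ∧
    ∃ 𝒲 : Set (Set X), (∀ W ∈ 𝒲, IsZeroSet W) ∧ kindSets k 𝒲 ∧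
      ∀ W ∈ 𝒲, ∃ U ∈ 𝒰, closure W ⊆ U}

/-- The function `f_{U,g}`: equal to `0` on `U` and to `1 + sup |g|` off `U`. -/
noncomputable def fU (U : Set X) (g : X → ℝ) : X → ℝ :=
  Uᶜ.indicator fun _ => 1 + ⨆ y, |g y|

/-- The family `S(𝒰) = {f_{U,g} + g : U ∈ 𝒰, g ∈ USC*_p(X)}`. -/
def SU [TopologicalSpace X] (𝒰 : Set (Set X)) : Set (X → ℝ) :=
  {f | ∃ U ∈ 𝒰, ∃ g ∈ USCb X, f = fU U g + g}

/-- The Sorgenfrey topology on `ℝ`, generated by the half-open intervals `[a, b)`. -/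
def sorgenfreyTop : TopologicalSpace ℝ :=
  TopologicalSpace.generateFrom {s | ∃ a b : ℝ, s = Set.Ico a b}

/-- The Sorgenfrey plane topology on `ℝ × ℝ`. -/
def sorgenfreyPlaneTop : TopologicalSpace (ℝ × ℝ) :=
  @instTopologicalSpaceProd ℝ ℝ sorgenfreyTop sorgenfreyTop

/-! Separability in (a) comes from selecting out of the constant sequence `USC*_p(X)`; since
`X` is infinite, `0̄` is not isolated in `USC*_p(X)`, so a dense selection accumulates at `0̄`.
(d) → (b): a Φ-cover `𝒰` gives the Φ̃↑-family of functions equal to some `g` on a member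
`U ∈ 𝒰` and at least `1` off `U`; selected functions accumulating at `0̄` force the selected
sets to form an ω-cover.
(b) → (c): a family in `Φ_0̄` yields, for each `ε > 0`, the Φ-cover by the sublevel sets
`{f < ε}` of its members; selecting along `ε = 1/(k+1)` in disjoint blocks of indices gives
`Ω_0̄`.
(c) → (a): each point `d` of a countable dense set is approached by a block of the selection,
since subtracting `d` from the members above `d` of a Φ̃↑-family gives a family in `Φ_0̄`. -/

theorem exists_selection_of_blocks {α : Type*} {A : ℕ → Set α} (g : ℕ → ℕ → α)
    (hg : ∀ k m, g k m ∈ A (Nat.pair k m)) :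
    ∃ sel : ℕ → α, (∀ n, sel n ∈ A n) ∧ ∀ k, range (g k) ⊆ range sel :=
  ⟨fun n => g n.unpair.1 n.unpair.2,
    fun n => by simpa only [Nat.pair_unpair] using hg n.unpair.1 n.unpair.2,
    fun k => by rintro _ ⟨m, rfl⟩; exact ⟨Nat.pair k m, by simp⟩⟩

theorem exists_selection_with_value {α : Type*} {A : ℕ → Set α} (hA : ∀ m, (A m).Nonempty)
    {m₀ : ℕ} {a : α} (ha : a ∈ A m₀) : ∃ g : ℕ → α, (∀ m, g m ∈ A m) ∧ g m₀ = a := by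
  classical
  choose z hz using hA
  refine ⟨Function.update z m₀ a, fun m => ?_, by simp⟩
  rcases eq_or_ne m m₀ with rfl | hm
  · simpa using ha
  · simpa [hm] using hz m

theorem mem_closure_diff_singleton_of_subset_closure {α : Type*} [TopologicalSpace α]
    [T1Space α] {a : α} {D H : Set α} (hH : H ⊆ closure D) (ha : a ∈ closure (H \ {a})) :
    a ∈ closure (D \ {a}) := by
  have hD : closure D ⊆ closure (D \ {a}) ∪ {a} :=
    calc closure D ⊆ closure (D \ {a} ∪ {a}) :=
          closure_mono (by rw [sdiff_union_self]; exact subset_union_left)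
      _ = closure (D \ {a}) ∪ {a} := by rw [closure_union, closure_singleton]
  exact closure_minimal (fun x hx => (hD (hH hx.1)).resolve_right hx.2) isClosed_closure ha

theorem infinite_range_of_tendsto_of_ne {α : Type*} [TopologicalSpace α] [T1Space α]
    {u : ℕ → α} {a : α} (hu : Tendsto u atTop (𝓝 a)) (hne : ∀ n, u n ≠ a) :
    (range u).Infinite := fun hfin =>
  let ⟨n, hn⟩ := hfin.isClosed.closure_eq ▸
    mem_closure_of_tendsto hu (Eventually.of_forall mem_range_self)
  hne n hn

theorem mem_closure_iff_finset {S : Set (X → ℝ)} {h : X → ℝ} :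
    h ∈ closure S ↔ ∀ (T : Finset X) (ε : ℝ), 0 < ε → ∃ f ∈ S, ∀ x ∈ T, |f x - h x| < ε := by
  simp_rw [mem_closure_iff_nhds, nhds_pi]
  constructor
  · intro hc T ε hε
    obtain ⟨f, hfT, hfS⟩ :=
      hc _ (pi_mem_pi T.finite_toSet fun x _ => Metric.ball_mem_nhds (h x) hε)
    exact ⟨f, hfS, fun x hx => by simpa [Real.dist_eq] using hfT x hx⟩
  · intro H s hs
    obtain ⟨I, t, ht, hts⟩ := mem_pi'.1 hs
    have hsmall : ∀ᶠ ε in 𝓝[>] (0 : ℝ), ε ∈ Ioi 0 ∧ ∀ x ∈ I, Metric.ball (h x) ε ⊆ t x := by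
      refine eventually_mem_nhdsWithin.and ((eventually_all_finset I).2 fun x _ => ?_)
      obtain ⟨ε, hε, hball⟩ := Metric.mem_nhds_iff.1 (ht x)
      filter_upwards [Ioo_mem_nhdsGT hε] with δ hδ
      exact (Metric.ball_subset_ball hδ.2.le).trans hball
    obtain ⟨ε, hε, hball⟩ := hsmall.exists
    obtain ⟨f, hfS, hf⟩ := H I ε hε
    exact ⟨f, hts fun x hx => hball x hx (by simpa [Real.dist_eq] using hf x hx), hfS⟩

theorem mem_closure_of_forall_finset_eqOn {S : Set (X → ℝ)} {h : X → ℝ}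
    (hS : ∀ T : Finset X, ∃ f ∈ S, ∀ x ∈ T, f x = h x) : h ∈ closure S :=
  mem_closure_iff_finset.2 fun T _ hε =>
    let ⟨f, hf, hfT⟩ := hS T
    ⟨f, hf, fun x hx => by simpa [hfT x hx] using hε⟩

theorem zero_mem_closure_iff_of_nonneg {S : Set (X → ℝ)} (hS : ∀ f ∈ S, 0 ≤ f) :
    (0 : X → ℝ) ∈ closure S ↔
      ∀ (T : Finset X) (ε : ℝ), 0 < ε → ∃ f ∈ S, ∀ x ∈ T, f x < ε := by
  have habs : ∀ f ∈ S, ∀ x, |f x - (0 : X → ℝ) x| = f x := fun f hf x => by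
    rw [Pi.zero_apply, sub_zero, abs_of_nonneg (hS f hf x)]
  rw [mem_closure_iff_finset]
  exact forall₃_congr fun T ε _ =>
    ⟨fun ⟨f, hf, hfT⟩ => ⟨f, hf, fun x hx => habs f hf x ▸ hfT x hx⟩,
      fun ⟨f, hf, hfT⟩ => ⟨f, hf, fun x hx => (habs f hf x).symm ▸ hfT x hx⟩⟩

theorem PropGamma.mem_closure {h : X → ℝ} {F : Set (X → ℝ)} (hF : PropGamma h F) :
    h ∈ closure F := by
  refine mem_closure_iff_finset.2 fun T ε hε => ?_
  obtain ⟨f, hfF, hf⟩ := (hF.1.sdiff (T.finite_toSet.biUnion fun x _ => hF.2 ε hε x)).nonempty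
  exact ⟨f, hfF, fun x hx => not_le.1 fun hle => hf (mem_biUnion hx ⟨hfF, hle⟩)⟩

theorem PropGamma.sdiff {h : X → ℝ} {F V : Set (X → ℝ)} (hF : PropGamma h F) (hV : V.Finite) :
    PropGamma h (F \ V) :=
  ⟨hF.1.sdiff hV, fun ε hε x => (hF.2 ε hε x).subset fun _ hf => ⟨hf.1.1, hf.2⟩⟩

theorem propGamma_range {u : ℕ → X → ℝ} {h : X → ℝ} (hu : Tendsto u atTop (𝓝 h))
    (hinf : (range u).Infinite) : PropGamma h (range u) := by
  refine ⟨hinf, fun ε hε x => ?_⟩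
  have hev := Metric.tendsto_nhds.1 (tendsto_pi_nhds.1 hu x) ε hε
  rw [← Nat.cofinite_eq_atTop] at hev
  have hfin : {j | ε ≤ |u j x - h x|}.Finite := by
    simpa [Real.dist_eq] using eventually_cofinite.1 hev
  refine (hfin.image u).subset ?_
  rintro _ ⟨⟨j, rfl⟩, hj⟩
  exact ⟨j, hj, rfl⟩

theorem zero_mem_closure_diff_zero {Φ : CoverKind}
    (hΦ : Φ = CoverKind.omega ∨ Φ = CoverKind.gamma) {F : Set (X → ℝ)}
    (hF : kindProp Φ 0 F) : (0 : X → ℝ) ∈ closure (F \ {0}) := by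
  rcases hΦ with rfl | rfl
  · rw [sdiff_singleton_eq_self hF.1]
    exact hF.2
  · exact (PropGamma.sdiff hF (finite_singleton 0)).mem_closure

theorem upTilde_subset {Φ : CoverKind} {S H : Set (X → ℝ)} (h : S ∈ upTilde Φ H) : S ⊆ H := by
  cases Φ <;> exact h.1

theorem exists_ge_of_mem_upTilde {Φ : CoverKind}
    (hΦ : Φ = CoverKind.omega ∨ Φ = CoverKind.gamma) {S H : Set (X → ℝ)}
    (hS : S ∈ upTilde Φ H) {f : X → ℝ} (hf : f ∈ H) : ∃ g ∈ S, f ≤ g := by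
  rcases hΦ with rfl | rfl
  · obtain ⟨g, hg⟩ := closure_nonempty_iff.1 ⟨f, hS.2 f hf ⟨hf, le_rfl⟩⟩
    exact ⟨g, hg.1, hg.2.1⟩
  · obtain ⟨u, hu, -⟩ := hS.2 f hf
    exact ⟨u 0, (hu 0).1, (hu 0).2.1⟩

section USC

variable [TopologicalSpace X]

theorem mem_USCb_iff {f : X → ℝ} :
    f ∈ USCb X ↔ UpperSemicontinuous f ∧ ∃ M : ℝ, ∀ x, |f x| ≤ M := by
  rw [upperSemicontinuous_iff_isOpen_preimage]
  rfl

theorem const_mem_USCb (c : ℝ) : (fun _ => c : X → ℝ) ∈ USCb X :=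
  mem_USCb_iff.2 ⟨upperSemicontinuous_const, |c|, fun _ => le_rfl⟩

theorem zero_mem_USCb : (0 : X → ℝ) ∈ USCb X := const_mem_USCb 0

theorem add_mem_USCb {f g : X → ℝ} (hf : f ∈ USCb X) (hg : g ∈ USCb X) : f + g ∈ USCb X := by
  obtain ⟨hf, Mf, hMf⟩ := mem_USCb_iff.1 hf
  obtain ⟨hg, Mg, hMg⟩ := mem_USCb_iff.1 hg
  exact mem_USCb_iff.2
    ⟨hf.add hg, Mf + Mg, fun x => (abs_add_le _ _).trans (add_le_add (hMf x) (hMg x))⟩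

theorem indicator_compl_mem_USCb {U : Set X} (hU : IsOpen U) {c : ℝ} (hc : 0 ≤ c) :
    Uᶜ.indicator (fun _ => c) ∈ USCb X :=
  mem_USCb_iff.2 ⟨hU.isClosed_compl.upperSemicontinuous_indicator hc, c, fun x => by
    rw [abs_of_nonneg (indicator_nonneg (fun _ _ => hc) x)]
    exact indicator_le_self' (fun _ _ => hc) x⟩

theorem finset_indicator_mem_USCb [T1Space X] (T : Finset X) {v : X → ℝ} (hv : 0 ≤ v) :
    (T : Set X).indicator v ∈ USCb X := by
  have hnonneg : ∀ x, 0 ≤ (T : Set X).indicator v x := indicator_nonneg fun t _ => hv t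
  refine mem_USCb_iff.2 ⟨fun x y hy => ?_, ∑ t ∈ T, v t, fun x => ?_⟩
  · have hx : ((T : Set X) \ {x})ᶜ ∈ 𝓝 x :=
      T.finite_toSet.sdiff.isClosed.isOpen_compl.mem_nhds (by simp)
    filter_upwards [hx] with x' hx'
    rcases eq_or_ne x' x with rfl | hne
    · exact hy
    · rw [indicator_of_notMem (by simpa [hne] using hx')]
      exact (hnonneg x).trans_lt hy
  · rw [abs_of_nonneg (hnonneg x)]
    by_cases hx : x ∈ T
    · rw [indicator_of_mem (by exact_mod_cast hx)]
      exact Finset.single_le_sum (fun t _ => hv t) hx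
    · rw [indicator_of_notMem (by exact_mod_cast hx)]
      exact Finset.sum_nonneg fun t _ => hv t

theorem exists_USCb_eqOn_finset [T1Space X] {f g : X → ℝ} (hf : f ∈ USCb X) (hfg : f ≤ g)
    (T : Finset X) : ∃ w ∈ USCb X, f ≤ w ∧ w - f ∈ USCb X ∧ ∀ x ∈ T, w x = g x := by
  have hv : 0 ≤ g - f := sub_nonneg.2 hfg
  have hs := finset_indicator_mem_USCb T hv
  refine ⟨f + (T : Set X).indicator (g - f), add_mem_USCb hf hs,
    le_add_of_nonneg_right (indicator_nonneg fun x _ => hv x), by simpa using hs,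
    fun x hx => ?_⟩
  simp [indicator_of_mem (Finset.mem_coe.2 hx)]

theorem zero_mem_closure_USCb_diff_zero [T1Space X] [Infinite X] :
    (0 : X → ℝ) ∈ closure (USCb X \ {0}) := by
  refine mem_closure_iff_finset.2 fun T ε hε => ?_
  obtain ⟨x₀, hx₀⟩ := T.finite_toSet.infinite_compl.nonempty
  let s := (({x₀} : Finset X) : Set X).indicator fun _ => (1 : ℝ)
  refine ⟨s, ⟨finset_indicator_mem_USCb _ fun _ => zero_le_one, fun hs => ?_⟩, fun x hx => ?_⟩
  · simpa [s] using congrFun hs x₀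
  · have hxx₀ : x ≠ x₀ := by rintro rfl; exact hx₀ hx
    simpa [s, hxx₀] using hε

theorem USCb_mem_upTilde [T1Space X] {Φ : CoverKind}
    (hΦ : Φ = CoverKind.omega ∨ Φ = CoverKind.gamma) : USCb X ∈ upTilde Φ (USCb X) := by
  rcases hΦ with rfl | rfl
  · refine ⟨subset_rfl, fun f hf g ⟨_, hfg⟩ => mem_closure_of_forall_finset_eqOn fun T => ?_⟩
    obtain ⟨w, hw, hfw, hwf, hwg⟩ := exists_USCb_eqOn_finset hf hfg T
    exact ⟨w, ⟨hw, hfw, hwf⟩, hwg⟩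
  · exact ⟨subset_rfl, fun f hf =>
      ⟨fun _ => f, fun _ => ⟨hf, le_rfl, by simpa using zero_mem_USCb⟩, tendsto_const_nhds⟩⟩

end USC

section Covers

theorem infinite_of_kindSets_omega {𝒰 : Set (Set X)} (h : kindSets CoverKind.omega 𝒰) :
    𝒰.Infinite := by
  intro hfin
  obtain ⟨-, huniv, hfinsub⟩ := h
  have hmiss : ∀ U ∈ 𝒰, ∃ x, x ∉ U := fun U hU =>
    not_forall.1 fun hall => huniv (eq_univ_of_forall hall ▸ hU)
  choose p hp using hmiss
  have := hfin.to_subtype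
  obtain ⟨U, hU, hsub⟩ := hfinsub (range fun U : 𝒰 => p U U.2) (finite_range _)
  exact hp U hU (hsub ⟨⟨U, hU⟩, rfl⟩)

theorem kindSets_gamma_diff {𝒰 𝒱 : Set (Set X)} (h : kindSets CoverKind.gamma 𝒰)
    (h𝒱 : 𝒱.Finite) : kindSets CoverKind.gamma (𝒰 \ 𝒱) := by
  obtain ⟨-, hinf, hfin⟩ := h
  refine ⟨fun x => ?_, hinf.sdiff h𝒱, fun x => (hfin x).subset fun U hU => ⟨hU.1.1, hU.2⟩⟩
  obtain ⟨U, hU, hxU⟩ := ((hinf.sdiff h𝒱).sdiff (hfin x)).nonempty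
  exact ⟨U, hU, not_not.1 fun hx => hxU ⟨hU.1, hx⟩⟩

variable [TopologicalSpace X]

theorem diff_univ_mem_openKindCovers {Φ : CoverKind}
    (hΦ : Φ = CoverKind.omega ∨ Φ = CoverKind.gamma) {𝒰 : Set (Set X)}
    (h : 𝒰 ∈ OpenKindCovers X Φ) : 𝒰 \ {univ} ∈ OpenKindCovers X Φ := by
  rcases hΦ with rfl | rfl
  · rwa [sdiff_singleton_eq_self h.2.2.1]
  · exact ⟨fun U hU => h.1 U hU.1, kindSets_gamma_diff h.2 (finite_singleton _)⟩

end Covers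

section SelectionPrinciples

theorem fU_nonneg (U : Set X) (g : X → ℝ) : 0 ≤ fU U g :=
  indicator_nonneg fun _ _ => add_nonneg zero_le_one (Real.iSup_nonneg fun _ => abs_nonneg _)

theorem fU_of_mem {U : Set X} (g : X → ℝ) {x : X} (hx : x ∈ U) : fU U g x = 0 :=
  indicator_of_notMem (not_not.2 hx) _

theorem one_le_fU_add {U : Set X} {g : X → ℝ} {M : ℝ} (hM : ∀ y, |g y| ≤ M) {x : X}
    (hx : x ∉ U) : 1 ≤ fU U g x + g x := by
  have hfU : fU U g x = 1 + ⨆ y, |g y| := indicator_of_mem hx _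
  have hsup : |g x| ≤ ⨆ y, |g y| :=
    le_ciSup (f := fun y => |g y|) ⟨M, by rintro _ ⟨y, rfl⟩; exact hM y⟩ x
  linarith [neg_le_abs (g x)]

variable [TopologicalSpace X]

theorem fU_mem_USCb {U : Set X} (hU : IsOpen U) (g : X → ℝ) : fU U g ∈ USCb X :=
  indicator_compl_mem_USCb hU (add_nonneg zero_le_one (Real.iSup_nonneg fun _ => abs_nonneg _))

theorem SU_subset {𝒰 : Set (Set X)} (hop : ∀ U ∈ 𝒰, IsOpen U) : SU 𝒰 ⊆ USCb X := by
  rintro _ ⟨U, hU, g, hg, rfl⟩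
  exact add_mem_USCb (fU_mem_USCb (hop U hU) g) hg

theorem SU_mem_upTilde [T1Space X] {Φ : CoverKind}
    (hΦ : Φ = CoverKind.omega ∨ Φ = CoverKind.gamma) {𝒰 : Set (Set X)}
    (h𝒰 : 𝒰 ∈ OpenKindCovers X Φ) : SU 𝒰 ∈ upTilde Φ (USCb X) := by
  rcases hΦ with rfl | rfl
  · refine ⟨SU_subset h𝒰.1, fun f hf g ⟨_, hfg⟩ => mem_closure_of_forall_finset_eqOn fun T => ?_⟩
    obtain ⟨U, hU, hTU⟩ := h𝒰.2.2.2 T T.finite_toSet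
    obtain ⟨w, hw, hfw, hwf, hwg⟩ := exists_USCb_eqOn_finset hf hfg T
    refine ⟨fU U w + w, ⟨⟨U, hU, w, hw, rfl⟩, le_add_of_nonneg_of_le (fU_nonneg U w) hfw, ?_⟩,
      fun x hx => ?_⟩
    · rw [add_sub_assoc]
      exact add_mem_USCb (fU_mem_USCb (h𝒰.1 U hU) w) hwf
    · rw [Pi.add_apply, fU_of_mem w (hTU hx), zero_add, hwg x hx]
  · refine ⟨SU_subset h𝒰.1, fun f hf => ?_⟩
    obtain ⟨-, hinf, hfin⟩ := h𝒰.2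
    let e := hinf.natEmbedding _
    refine ⟨fun j => fU (e j) f + f, fun j => ⟨⟨e j, (e j).2, f, hf, rfl⟩,
      le_add_of_nonneg_left (fU_nonneg _ _), ?_⟩, tendsto_pi_nhds.2 fun x => ?_⟩
    · rw [add_sub_cancel_right]
      exact fU_mem_USCb (h𝒰.1 _ (e j).2) f
    have hfin' : {j | x ∉ (e j : Set X)}.Finite :=
      ((hfin x).preimage (Subtype.val_injective.comp e.injective).injOn).subset
        fun j hj => ⟨(e j).2, hj⟩
    have hev : ∀ᶠ j in atTop, x ∈ (e j : Set X) := by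
      simpa [← Nat.cofinite_eq_atTop] using hfin'.eventually_cofinite_notMem
    exact tendsto_const_nhds.congr' (hev.mono fun j hj => by simp [fU_of_mem _ hj])

theorem range_mem_openOmegaCovers {U : ℕ → Set X} {e : ℕ → X → ℝ} (hU : ∀ n, IsOpen (U n))
    (huniv : ∀ n, U n ≠ univ) (he : ∀ n x, x ∉ U n → 1 ≤ e n x)
    (h0 : (0 : X → ℝ) ∈ closure (range e)) : range U ∈ OpenKindCovers X CoverKind.omega := by
  have hsub : ∀ T : Finset X, ∃ n, ↑T ⊆ U n := fun T => by
    obtain ⟨_, ⟨n, rfl⟩, hn⟩ := mem_closure_iff_finset.1 h0 T 1 one_pos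
    refine ⟨n, fun x hx => not_not.1 fun hxU => ?_⟩
    have := hn x hx
    rw [Pi.zero_apply, sub_zero] at this
    linarith [he n x hxU, le_abs_self (e n x)]
  refine ⟨by rintro _ ⟨n, rfl⟩; exact hU n, fun x => ?_, fun ⟨n, hn⟩ => huniv n hn,
    fun T hT => ?_⟩
  · obtain ⟨n, hn⟩ := hsub {x}
    exact ⟨U n, ⟨n, rfl⟩, hn (by simp)⟩
  · obtain ⟨n, hn⟩ := hsub hT.toFinset
    exact ⟨U n, ⟨n, rfl⟩, by simpa using hn⟩

theorem S1_openCovers_of_S1_upTilde_propOmega [T1Space X] {Φ : CoverKind}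
    (hΦ : Φ = CoverKind.omega ∨ Φ = CoverKind.gamma)
    (hd : S1 (upTilde Φ (USCb X)) {F | PropOmega 0 F}) :
    S1 (OpenKindCovers X Φ) (OpenKindCovers X CoverKind.omega) := by
  intro u hu
  obtain ⟨e, he, -, h0⟩ := hd (fun n => SU (u n \ {univ}))
    fun n => SU_mem_upTilde hΦ (diff_univ_mem_openKindCovers hΦ (hu n))
  choose U hU g hg heq using he
  refine ⟨U, fun n => (hU n).1,
    range_mem_openOmegaCovers (fun n => (hu n).1 _ (hU n).1) (fun n => (hU n).2) ?_ h0⟩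
  intro n x hx
  obtain ⟨M, hM⟩ := (hg n).2
  rw [heq n]
  exact one_le_fU_add hM hx

def sublevelCover (F : Set (X → ℝ)) (ε : ℝ) : Set (Set X) :=
  (fun f => {x | f x < ε}) '' (F \ {0})

theorem sublevelCover_mem_openOmegaCovers {Φ : CoverKind}
    (hΦ : Φ = CoverKind.omega ∨ Φ = CoverKind.gamma) {F : Set (X → ℝ)}
    (hF : F ∈ PhiH Φ 0 (USCb X)) {ε : ℝ} (hε : 0 < ε) (huniv : univ ∉ sublevelCover F ε) :
    sublevelCover F ε ∈ OpenKindCovers X CoverKind.omega := by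
  have hsmall := (zero_mem_closure_iff_of_nonneg fun f hf => (hF.2.2 f hf.1).1).1
    (zero_mem_closure_diff_zero hΦ hF.2.1)
  have hsub : ∀ T : Finset X, ∃ U ∈ sublevelCover F ε, ↑T ⊆ U := fun T =>
    let ⟨f, hf, hfT⟩ := hsmall T ε hε
    ⟨_, ⟨f, hf, rfl⟩, hfT⟩
  refine ⟨by rintro _ ⟨f, hf, rfl⟩; exact (hF.1 hf.1).1 ε, fun x => ?_, huniv, fun T hT => ?_⟩
  · obtain ⟨U, hU, hxU⟩ := hsub {x}
    exact ⟨U, hU, hxU (by simp)⟩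
  · simpa using hsub hT.toFinset

theorem sublevelCover_mem_openKindCovers {Φ : CoverKind}
    (hΦ : Φ = CoverKind.omega ∨ Φ = CoverKind.gamma) {F : Set (X → ℝ)}
    (hF : F ∈ PhiH Φ 0 (USCb X)) {ε : ℝ} (hε : 0 < ε) (huniv : univ ∉ sublevelCover F ε) :
    sublevelCover F ε ∈ OpenKindCovers X Φ := by
  have hω := sublevelCover_mem_openOmegaCovers hΦ hF hε huniv
  rcases hΦ with rfl | rfl
  · exact hω
  refine ⟨hω.1, hω.2.1, infinite_of_kindSets_omega hω.2, fun x => ?_⟩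
  refine ((hF.2.1.2 ε hε x).image fun f => {x | f x < ε}).subset ?_
  rintro _ ⟨⟨f, hf, rfl⟩, hx⟩
  refine ⟨f, ⟨hf.1, ?_⟩, rfl⟩
  rw [Pi.zero_apply, sub_zero, abs_of_nonneg ((hF.2.2 f hf.1).1 x)]
  exact not_lt.1 hx

theorem exists_seq_lt_on_finset {Φ : CoverKind}
    (hΦ : Φ = CoverKind.omega ∨ Φ = CoverKind.gamma)
    (hb : S1 (OpenKindCovers X Φ) (OpenKindCovers X CoverKind.omega))
    {F : ℕ → Set (X → ℝ)} (hF : ∀ m, F m ∈ PhiH Φ 0 (USCb X)) {ε : ℝ} (hε : 0 < ε) :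
    ∃ g : ℕ → X → ℝ, (∀ m, g m ∈ F m \ {0}) ∧ ∀ T : Finset X, ∃ m, ∀ x ∈ T, g m x < ε := by
  by_cases hbig : ∃ m, univ ∈ sublevelCover (F m) ε
  · obtain ⟨m₀, f₀, hf₀, hf₀ε⟩ := hbig
    obtain ⟨g, hg, hgm₀⟩ := exists_selection_with_value
      (fun m => closure_nonempty_iff.1 ⟨0, zero_mem_closure_diff_zero hΦ (hF m).2.1⟩) hf₀
    exact ⟨g, hg, fun _ => ⟨m₀, fun x _ => hgm₀ ▸ eq_univ_iff_forall.1 hf₀ε x⟩⟩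
  · obtain ⟨U, hU, hUω⟩ := hb _ fun m =>
      sublevelCover_mem_openKindCovers hΦ (hF m) hε fun h => hbig ⟨m, h⟩
    choose g hg hgU using hU
    refine ⟨g, hg, fun T => ?_⟩
    obtain ⟨_, ⟨m, rfl⟩, hTU⟩ := hUω.2.2.2 T T.finite_toSet
    refine ⟨m, fun x hx => ?_⟩
    have hxU := hTU hx
    rw [← hgU m] at hxU
    exact hxU

theorem S1_PhiH_of_S1_openCovers {Φ : CoverKind}
    (hΦ : Φ = CoverKind.omega ∨ Φ = CoverKind.gamma)
    (hb : S1 (OpenKindCovers X Φ) (OpenKindCovers X CoverKind.omega)) :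
    S1 (PhiH Φ 0 (USCb X)) (PhiH CoverKind.omega 0 (USCb X)) := by
  intro F hF
  choose g hg hgT using fun k =>
    exists_seq_lt_on_finset hΦ hb (fun m => hF (Nat.pair k m)) (Nat.one_div_pos_of_nat (n := k))
  obtain ⟨sel, hsel, hrange⟩ := exists_selection_of_blocks (A := fun n => F n \ {0}) g hg
  have hsel0 : ∀ f ∈ range sel, 0 ≤ f ∧ f - 0 ∈ USCb X := by
    rintro _ ⟨n, rfl⟩
    exact (hF n).2.2 _ (hsel n).1
  refine ⟨sel, fun n => (hsel n).1, ?_, ⟨?_, ?_⟩, hsel0⟩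
  · rintro _ ⟨n, rfl⟩
    exact (hF n).1 (hsel n).1
  · rintro ⟨n, hn⟩
    exact (hsel n).2 hn
  · refine (zero_mem_closure_iff_of_nonneg fun f hf => (hsel0 f hf).1).2 fun T ε hε => ?_
    obtain ⟨k, hk⟩ := exists_nat_one_div_lt hε
    obtain ⟨m, hm⟩ := hgT k T
    exact ⟨g k m, hrange k ⟨m, rfl⟩, fun x hx => (hm x hx).trans hk⟩

theorem exists_shift_mem_PhiH {Φ : CoverKind} (hΦ : Φ = CoverKind.omega ∨ Φ = CoverKind.gamma)
    {S : Set (X → ℝ)} (hS : S ∈ upTilde Φ (USCb X)) {f : X → ℝ} (hf : f ∈ USCb X)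
    (hfS : f ∉ S) : ∃ F ∈ PhiH Φ 0 (USCb X), ∀ e ∈ F, e + f ∈ S := by
  rcases hΦ with rfl | rfl
  · let G := {g | g ∈ S ∧ f ≤ g ∧ g - f ∈ USCb X}
    refine ⟨(· - f) '' G, ⟨?_, ⟨?_, ?_⟩, ?_⟩, ?_⟩
    · rintro _ ⟨g, hg, rfl⟩
      exact hg.2.2
    · rintro ⟨g, hg, hg0⟩
      exact hfS (sub_eq_zero.1 hg0 ▸ hg.1)
    · simpa using map_mem_closure (continuous_sub_right f) (hS.2 f hf ⟨hf, le_rfl⟩)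
        (mapsTo_image _ G)
    · rintro _ ⟨g, hg, rfl⟩
      exact ⟨sub_nonneg.2 hg.2.1, by simpa using hg.2.2⟩
    · rintro _ ⟨g, hg, rfl⟩
      simpa using hg.1
  · obtain ⟨u, hu, hlim⟩ := hS.2 f hf
    have hlim0 : Tendsto (fun j => u j - f) atTop (𝓝 0) := by simpa using hlim.sub_const f
    have hne : ∀ j, u j - f ≠ 0 := fun j h => hfS (sub_eq_zero.1 h ▸ (hu j).1)
    refine ⟨range fun j => u j - f,
      ⟨?_, propGamma_range hlim0 (infinite_range_of_tendsto_of_ne hlim0 hne), ?_⟩, ?_⟩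
    · rintro _ ⟨j, rfl⟩
      exact (hu j).2.2
    · rintro _ ⟨j, rfl⟩
      exact ⟨sub_nonneg.2 (hu j).2.1, by simpa using (hu j).2.2⟩
    · rintro _ ⟨j, rfl⟩
      simpa using (hu j).1

theorem exists_selection_mem_closure {Φ : CoverKind}
    (hΦ : Φ = CoverKind.omega ∨ Φ = CoverKind.gamma)
    (hc : S1 (PhiH Φ 0 (USCb X)) (PhiH CoverKind.omega 0 (USCb X)))
    {S : ℕ → Set (X → ℝ)} (hS : ∀ m, S m ∈ upTilde Φ (USCb X)) {f : X → ℝ} (hf : f ∈ USCb X) :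
    ∃ g : ℕ → X → ℝ, (∀ m, g m ∈ S m) ∧ f ∈ closure (range g) := by
  by_cases hfS : ∃ m, f ∈ S m
  · obtain ⟨m₀, hm₀⟩ := hfS
    have hne : ∀ m, (S m).Nonempty := fun m =>
      let ⟨g, hg, _⟩ := exists_ge_of_mem_upTilde hΦ (hS m) hf
      ⟨g, hg⟩
    obtain ⟨g, hg, hgm₀⟩ := exists_selection_with_value hne hm₀
    exact ⟨g, hg, subset_closure ⟨m₀, hgm₀⟩⟩
  · choose F hF hFS using fun m => exists_shift_mem_PhiH hΦ (hS m) hf fun h => hfS ⟨m, h⟩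
    obtain ⟨v, hv, -, ⟨-, h0⟩, -⟩ := hc F hF
    refine ⟨fun m => v m + f, fun m => hFS m _ (hv m), ?_⟩
    simpa using map_mem_closure (continuous_add_const f) h0
      (by rintro _ ⟨m, rfl⟩; exact ⟨m, rfl⟩)

theorem S1_upTilde_Dfam_of_S1_PhiH {Φ : CoverKind}
    (hΦ : Φ = CoverKind.omega ∨ Φ = CoverKind.gamma) (hsep : SeparableSet (USCb X))
    (hc : S1 (PhiH Φ 0 (USCb X)) (PhiH CoverKind.omega 0 (USCb X))) :
    S1 (upTilde Φ (USCb X)) (Dfam (USCb X)) := by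
  intro S hS
  obtain ⟨D, hDc, hDH, hHD⟩ := hsep
  obtain ⟨d, rfl⟩ := hDc.exists_eq_range (closure_nonempty_iff.1 ⟨0, hHD zero_mem_USCb⟩)
  choose g hg hdg using fun k =>
    exists_selection_mem_closure hΦ hc (fun m => hS (Nat.pair k m)) (hDH ⟨k, rfl⟩)
  obtain ⟨sel, hsel, hrange⟩ := exists_selection_of_blocks g hg
  refine ⟨sel, hsel, ?_, hHD.trans (closure_minimal ?_ isClosed_closure)⟩
  · rintro _ ⟨n, rfl⟩
    exact upTilde_subset (hS n) (hsel n)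
  · rintro _ ⟨k, rfl⟩
    exact closure_mono (hrange k) (hdg k)

theorem separableSet_of_S1_upTilde_Dfam [T1Space X] {Φ : CoverKind}
    (hΦ : Φ = CoverKind.omega ∨ Φ = CoverKind.gamma)
    (ha : S1 (upTilde Φ (USCb X)) (Dfam (USCb X))) : SeparableSet (USCb X) :=
  let ⟨sel, _, hsel⟩ := ha _ fun _ => USCb_mem_upTilde hΦ
  ⟨range sel, countable_range sel, hsel⟩

theorem S1_upTilde_propOmega_of_S1_upTilde_Dfam [T1Space X] [Infinite X] {Φ : CoverKind}
    (hΦ : Φ = CoverKind.omega ∨ Φ = CoverKind.gamma)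
    (ha : S1 (upTilde Φ (USCb X)) (Dfam (USCb X))) :
    S1 (upTilde Φ (USCb X)) {F | PropOmega 0 F} := by
  classical
  intro S hS
  obtain ⟨g, hg, -, hHg⟩ := ha S hS
  have hne : ∀ n, (S n \ {0}).Nonempty := fun n =>
    let ⟨z, hz, h1z⟩ := exists_ge_of_mem_upTilde hΦ (hS n) (const_mem_USCb 1)
    ⟨z, hz, fun h0 => by
      rw [show z = 0 from h0] at h1z
      exact absurd (h1z (Classical.arbitrary X)) (by norm_num)⟩
  choose z hz using hne
  let f n := if g n = 0 then z n else g n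
  refine ⟨f, fun n => ?_, ⟨?_, ?_⟩⟩
  · by_cases h : g n = 0 <;> simp [f, h, (hz n).1, hg n]
  · rintro ⟨n, hn⟩
    by_cases h : g n = 0
    · exact (hz n).2 (by simpa [f, h] using hn)
    · simp [f, h] at hn
  · refine closure_mono ?_
      (mem_closure_diff_singleton_of_subset_closure hHg zero_mem_closure_USCb_diff_zero)
    rintro _ ⟨⟨n, rfl⟩, hn⟩
    exact ⟨n, if_neg hn⟩

end SelectionPrinciples

theorem statement8_general {X : Type*} [TopologicalSpace X] [T2Space X] [Infinite X]
    (Φ : CoverKind) (hΦ : Φ = CoverKind.omega ∨ Φ = CoverKind.gamma) :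
    List.TFAE [
      S1 (upTilde Φ (USCb X)) (Dfam (USCb X)),
      SeparableSet (USCb X) ∧
        S1 (OpenKindCovers X Φ) (OpenKindCovers X CoverKind.omega),
      SeparableSet (USCb X) ∧
        S1 (PhiH Φ (0 : X → ℝ) (USCb X)) (PhiH CoverKind.omega (0 : X → ℝ) (USCb X)),
      SeparableSet (USCb X) ∧
        S1 (upTilde Φ (USCb X)) {F | PropOmega (0 : X → ℝ) F}] := by
  tfae_have 1 → 4 := fun ha =>
    ⟨separableSet_of_S1_upTilde_Dfam hΦ ha, S1_upTilde_propOmega_of_S1_upTilde_Dfam hΦ ha⟩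
  tfae_have 4 → 2 := fun ⟨hsep, hd⟩ => ⟨hsep, S1_openCovers_of_S1_upTilde_propOmega hΦ hd⟩
  tfae_have 2 → 3 := fun ⟨hsep, hb⟩ => ⟨hsep, S1_PhiH_of_S1_openCovers hΦ hb⟩
  tfae_have 3 → 1 := fun ⟨hsep, hc⟩ => S1_upTilde_Dfam_of_S1_PhiH hΦ hsep hc
  tfae_finish

/-- For Φ ∈ {Ω, Γ}, X infinite Hausdorff with C*_p(X) countably dense
in USC*_p(X), TFAE:
(a) USC*_p(X) satisfies S₁(Φ̃↑, 𝒟);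
(b) USC*_p(X) is separable and X is an S₁(Φ,Ω)-space;
(c) USC*_p(X) is separable and satisfies S₁(Φ_0̄,Ω_0̄);
(d) USC*_p(X) is separable and satisfies S₁(Φ̃↑,Ω_0̄). -/
theorem statement8 {X : Type*} [TopologicalSpace X] [T2Space X] [Infinite X]
    (Φ : CoverKind) (hΦ : Φ = CoverKind.omega ∨ Φ = CoverKind.gamma)
    (hcd : ∀ f ∈ USCb X, ∃ G : Set (X → ℝ), G ⊆ Cb X ∧ G.Countable ∧ f ∈ closure G) :
    List.TFAE [
      S1 (upTilde Φ (USCb X)) (Dfam (USCb X)),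
      SeparableSet (USCb X) ∧
        S1 (OpenKindCovers X Φ) (OpenKindCovers X CoverKind.omega),
      SeparableSet (USCb X) ∧
        S1 (PhiH Φ (0 : X → ℝ) (USCb X)) (PhiH CoverKind.omega (0 : X → ℝ) (USCb X)),
      SeparableSet (USCb X) ∧
        S1 (upTilde Φ (USCb X)) {F | PropOmega (0 : X → ℝ) F}] :=
  statement8_general Φ hΦ

end Selectors
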